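/- arXiv:1512.08880 — 6 statements merged into one kernel-verified Lean document; each statement's English description precedes it below -/
import Mathlib

section
/- Let G be an admissible feasibility set. Then there exists a constant C₂ > 0 such that |Φ_G(p_G, p_D) − Φ_G(p_G', p_D')| ≤ C₂ (‖p_G − p_G'‖ + ‖p_D − p_D'‖) for all (p_G, p_D), (p_G', p_D') ∈ D_G × ℝ^{n_L}_+, where ‖·‖ denotes the Euclidean norm. -/
open scoped BigOperators

/-- The minimal load-shedding cost
`Φ_G(p_G, p_D) := inf { c^⊤ z : z ∈ ℝ^{n_L}_+, (p_G, p_D − z) ∈ G }`. -/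
noncomputable def loadShedCost {nG nL : ℕ} (c : EuclideanSpace ℝ (Fin nL))
    (G : Set (EuclideanSpace ℝ (Fin nG) × EuclideanSpace ℝ (Fin nL)))
    (pG : EuclideanSpace ℝ (Fin nG)) (pD : EuclideanSpace ℝ (Fin nL)) : ℝ :=
  sInf {t : ℝ | ∃ z : EuclideanSpace ℝ (Fin nL),
    (∀ j, 0 ≤ z j) ∧ (pG, pD - z) ∈ G ∧ t = ∑ j, c j * z j}

/-- `G ⊆ ℝ^{n_G} × ℝ^{n_L}` is an admissible feasibility set (relative to `D_G`). -/
structure IsAdmissibleFeasibilitySet {nG nL : ℕ}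
    (DG : Set (EuclideanSpace ℝ (Fin nG)))
    (G : Set (EuclideanSpace ℝ (Fin nG) × EuclideanSpace ℝ (Fin nL))) : Prop where
  /-- (A) `G` is convex -/
  convex : Convex ℝ G
  /-- (A) `G` is compact -/
  compact : IsCompact G
  /-- (A) `G ⊆ ℝ^{n_G} × ℝ^{n_L}_+` -/
  snd_nonneg : ∀ p ∈ G, ∀ j, 0 ≤ p.2 j
  /-- (B) load shedding can always restore feasibility -/
  shed : ∀ pG ∈ DG, ∀ pD : EuclideanSpace ℝ (Fin nL), (∀ j, 0 ≤ pD j) →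
    ∃ z : EuclideanSpace ℝ (Fin nL), (∀ j, 0 ≤ z j) ∧ (pG, pD - z) ∈ G
  /-- (C) nonempty interior slices -/
  interior_slice : ∀ pG ∈ DG, ∃ pD : EuclideanSpace ℝ (Fin nL), (pG, pD) ∈ interior G
  /-- (D) load over-satisfaction -/
  oversat : ∀ pG pD, (pG, pD) ∈ G →
    ∀ pD' : EuclideanSpace ℝ (Fin nL), (∀ j, 0 ≤ pD' j) → (∀ j, pD' j ≤ pD j) →
      (pG, pD') ∈ G

/-!
`Φ(pG, pD)` is the infimum of `c^⊤ (pD - y)⁺` over the slice `{y | (pG, y) ∈ G}`: a shedding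
`z` gives `y = pD - z` at the same cost, and by (D) any `y` of the slice can be served by shedding
`(pD - y)⁺`. The integrand is `‖c‖`-Lipschitz in `pD - y`, so it suffices that the slices move
Lipschitz continuously with `pG ∈ D_G`. By (C) and compactness of `D_G`, the projection of `G`
contains a uniform `r`-neighbourhood of `D_G`; convexity then moves a point `(pG', y)` of `G` to
a point `(pG, y')` with `‖y' - y‖ ≤ 2M/r ‖pG - pG'‖`, where `M` bounds `G`.
-/

open Metric

theorem IsCompact.exists_closedBall_subset_image_fst {E F : Type*} [PseudoMetricSpace E]
    [TopologicalSpace F] {K : Set E} {S : Set (E × F)} (hK : IsCompact K)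
    (h : ∀ x ∈ K, ∃ y, (x, y) ∈ interior S) :
    ∃ r > 0, ∀ x ∈ K, closedBall x r ⊆ Prod.fst '' S := by
  have hK_int : K ⊆ interior (Prod.fst '' S) := fun x hx ↦ by
    obtain ⟨y, hy⟩ := h x hx
    exact isOpenMap_fst.image_interior_subset S ⟨(x, y), hy, rfl⟩
  obtain ⟨r, hr, hsub⟩ := hK.exists_cthickening_subset_open isOpen_interior hK_int
  exact ⟨r, hr, fun x hx ↦
    (closedBall_subset_cthickening hx r).trans (hsub.trans interior_subset)⟩

theorem Convex.exists_mem_near_of_closedBall_subset_image_fst {E F : Type*}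
    [NormedAddCommGroup E] [NormedSpace ℝ E] [NormedAddCommGroup F] [NormedSpace ℝ F]
    {S : Set (E × F)} (hS : Convex ℝ S) {M r : ℝ} (hM : ∀ p ∈ S, ‖p.2‖ ≤ M)
    (hr : 0 < r) {x x' : E} {y : F} (hxy : (x, y) ∈ S)
    (hball : closedBall x' r ⊆ Prod.fst '' S) :
    ∃ y', (x', y') ∈ S ∧ ‖y' - y‖ ≤ 2 * M / r * ‖x' - x‖ := by
  obtain hxx | hδ := (norm_nonneg (x' - x)).eq_or_lt
  · obtain rfl : x' = x := sub_eq_zero.1 (norm_eq_zero.1 hxx.symm)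
    exact ⟨y, hxy, by simp⟩
  set δ := ‖x' - x‖
  -- `x'` divides the segment from `x` to the point `u` at distance `r` beyond it
  -- in the ratio `δ : r`.
  set u := x' + (r / δ) • (x' - x)
  have hu : u ∈ closedBall x' r := by
    rw [mem_closedBall, dist_eq_norm, add_sub_cancel_left, norm_smul,
      Real.norm_of_nonneg (by positivity), div_mul_cancel₀ _ hδ.ne']
  obtain ⟨⟨_, q⟩, huq, rfl⟩ := hball hu
  set t := δ / (δ + r)
  have ht₀ : 0 ≤ t := by positivity
  have ht₁ : t ≤ 1 := div_le_one_of_le₀ (by linarith) (by positivity)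
  have hx' : (1 - t) • x + t • u = x' := by
    have : t * (r / δ) = 1 - t := by simp only [t]; field_simp; ring
    simp only [u, smul_add, smul_smul, this]
    module
  refine ⟨(1 - t) • y + t • q, ?_, ?_⟩
  · simpa [hx'] using hS hxy huq (sub_nonneg.2 ht₁) ht₀ (sub_add_cancel 1 t)
  · have hqy : ‖q - y‖ ≤ 2 * M := by
      linarith [norm_sub_le q y, hM _ huq, hM _ hxy]
    calc ‖(1 - t) • y + t • q - y‖ = t * ‖q - y‖ := by
          rw [show (1 - t) • y + t • q - y = t • (q - y) by module, norm_smul,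
            Real.norm_of_nonneg ht₀]
      _ ≤ δ / r * (2 * M) := by
          gcongr
          exact div_le_div_of_nonneg_left hδ.le hr (by linarith)
      _ = 2 * M / r * δ := by ring

theorem sum_mul_abs_le_norm_mul_norm {n : ℕ} (c d : EuclideanSpace ℝ (Fin n)) :
    ∑ j, c j * |d j| ≤ ‖c‖ * ‖d‖ := by
  simpa [EuclideanSpace.norm_eq, sq_abs] using
    Real.sum_mul_le_sqrt_mul_sqrt Finset.univ (fun j ↦ c j) (fun j ↦ |d j|)

/-- `c^⊤ v⁺`: the cost of shedding the excess `v` of demand over supply. -/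
def shortfallCost {n : ℕ} (c v : EuclideanSpace ℝ (Fin n)) : ℝ :=
  ∑ j, c j * max (v j) 0

section ShortfallCost

variable {n : ℕ} {c : EuclideanSpace ℝ (Fin n)}

theorem shortfallCost_of_nonneg {z : EuclideanSpace ℝ (Fin n)} (hz : ∀ j, 0 ≤ z j) :
    shortfallCost c z = ∑ j, c j * z j := by
  simp only [shortfallCost, max_eq_left (hz _)]

theorem shortfallCost_le_add (hc : ∀ j, 0 ≤ c j) (v w : EuclideanSpace ℝ (Fin n)) :
    shortfallCost c v ≤ shortfallCost c w + ‖c‖ * ‖v - w‖ := by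
  calc shortfallCost c v ≤ ∑ j, (c j * max (w j) 0 + c j * |(v - w) j|) := by
        refine Finset.sum_le_sum fun j _ ↦ ?_
        rw [← mul_add]
        gcongr
        · exact hc j
        · have := (le_abs_self _).trans (abs_max_sub_max_le_abs (v j) (w j) 0)
          simp only [PiLp.sub_apply]
          linarith
    _ ≤ shortfallCost c w + ‖c‖ * ‖v - w‖ := by
        rw [Finset.sum_add_distrib]
        exact add_le_add_right (sum_mul_abs_le_norm_mul_norm c (v - w)) _

end ShortfallCost

section LoadShedCost

variable {nG nL : ℕ} {c : EuclideanSpace ℝ (Fin nL)}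
  {G : Set (EuclideanSpace ℝ (Fin nG) × EuclideanSpace ℝ (Fin nL))}

/-- The witness is `z = (pD - y)⁺`, feasible by (D) since `pD - z = min pD y`. -/
theorem loadShedCost_le_shortfallCost (hc : ∀ j, 0 ≤ c j)
    (hG_nonneg : ∀ p ∈ G, ∀ j, 0 ≤ p.2 j)
    (hG_oversat : ∀ pG pD, (pG, pD) ∈ G → ∀ pD' : EuclideanSpace ℝ (Fin nL),
      (∀ j, 0 ≤ pD' j) → (∀ j, pD' j ≤ pD j) → (pG, pD') ∈ G)
    {pG : EuclideanSpace ℝ (Fin nG)} {pD y : EuclideanSpace ℝ (Fin nL)} (hy : (pG, y) ∈ G)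
    (hpD : ∀ j, 0 ≤ pD j) :
    loadShedCost c G pG pD ≤ shortfallCost c (pD - y) := by
  refine csInf_le ⟨0, ?_⟩ ⟨WithLp.toLp 2 fun j ↦ max (pD j - y j) 0,
    fun j ↦ le_max_right _ _, hG_oversat pG y hy _ (fun j ↦ ?_) (fun j ↦ ?_), rfl⟩
  · rintro _ ⟨z, hz, -, rfl⟩
    exact Finset.sum_nonneg fun j _ ↦ mul_nonneg (hc j) (hz j)
  · have := hG_nonneg _ hy j
    simp only [PiLp.sub_apply]
    rcases le_total (pD j) (y j) with h | h <;> simp [h] <;> linarith [hpD j]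
  · simp only [PiLp.sub_apply]
    rcases le_total (pD j) (y j) with h | h <;> simp [h]

theorem loadShedCost_le_add {DG : Set (EuclideanSpace ℝ (Fin nG))} (hc : ∀ j, 0 ≤ c j)
    (hG : IsAdmissibleFeasibilitySet DG G) {M r : ℝ} (hM : ∀ p ∈ G, ‖p.2‖ ≤ M)
    (hr : 0 < r)
    {pG pG' : EuclideanSpace ℝ (Fin nG)} (hball : closedBall pG r ⊆ Prod.fst '' G)
    (hpG' : pG' ∈ DG) {pD pD' : EuclideanSpace ℝ (Fin nL)} (hpD : ∀ j, 0 ≤ pD j)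
    (hpD' : ∀ j, 0 ≤ pD' j) :
    loadShedCost c G pG pD ≤ loadShedCost c G pG' pD' +
      ‖c‖ * max (2 * M / r) 1 * (‖pG - pG'‖ + ‖pD - pD'‖) := by
  obtain ⟨z₀, hz₀, hz₀G⟩ := hG.shed pG' hpG' pD' hpD'
  rw [← sub_le_iff_le_add]
  refine le_csInf ⟨_, z₀, hz₀, hz₀G, rfl⟩ ?_
  rintro _ ⟨z, hz, hzG, rfl⟩
  rw [sub_le_iff_le_add]
  obtain ⟨y, hyG, hy⟩ :=
    hG.convex.exists_mem_near_of_closedBall_subset_image_fst hM hr hzG hball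
  have hG₀ := norm_nonneg (pG - pG')
  have hD₀ := norm_nonneg (pD - pD')
  calc loadShedCost c G pG pD ≤ shortfallCost c (pD - y) :=
        loadShedCost_le_shortfallCost hc hG.snd_nonneg hG.oversat hyG hpD
    _ ≤ shortfallCost c z + ‖c‖ * ‖pD - y - z‖ := shortfallCost_le_add hc _ _
    _ ≤ ∑ j, c j * z j + ‖c‖ * (‖pD - pD'‖ + 2 * M / r * ‖pG - pG'‖) := by
        rw [shortfallCost_of_nonneg hz,
          show pD - y - z = (pD - pD') - (y - (pD' - z)) by abel]
        gcongr
        exact (norm_sub_le _ _).trans (by gcongr)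
    _ ≤ ∑ j, c j * z j + ‖c‖ * max (2 * M / r) 1 * (‖pG - pG'‖ + ‖pD - pD'‖) := by
        rw [mul_assoc]
        gcongr
        nlinarith [le_max_left (2 * M / r) 1, le_max_right (2 * M / r) 1]

end LoadShedCost

theorem loadShedCost_lipschitz_general {nG nL : ℕ}
    (DG : Set (EuclideanSpace ℝ (Fin nG)))
    (hDGcomp : IsCompact DG)
    (c : EuclideanSpace ℝ (Fin nL)) (hc : ∀ j, 0 < c j)
    (G : Set (EuclideanSpace ℝ (Fin nG) × EuclideanSpace ℝ (Fin nL)))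
    (hG : IsAdmissibleFeasibilitySet DG G) :
    ∃ C₂ : ℝ, 0 < C₂ ∧
      ∀ pG ∈ DG, ∀ pG' ∈ DG, ∀ pD pD' : EuclideanSpace ℝ (Fin nL),
        (∀ j, 0 ≤ pD j) → (∀ j, 0 ≤ pD' j) →
          |loadShedCost c G pG pD - loadShedCost c G pG' pD'| ≤
            C₂ * (‖pG - pG'‖ + ‖pD - pD'‖) := by
  obtain ⟨M, hM⟩ := isBounded_iff_forall_norm_le.1 hG.compact.isBounded
  have hM₂ : ∀ p ∈ G, ‖p.2‖ ≤ M := fun p hp ↦ (norm_snd_le p).trans (hM p hp)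
  obtain ⟨r, hr, hball⟩ := hDGcomp.exists_closedBall_subset_image_fst hG.interior_slice
  set C := ‖c‖ * max (2 * M / r) 1 + 1
  have key : ∀ pG ∈ DG, ∀ pG' ∈ DG, ∀ pD pD' : EuclideanSpace ℝ (Fin nL),
      (∀ j, 0 ≤ pD j) → (∀ j, 0 ≤ pD' j) →
        loadShedCost c G pG pD - loadShedCost c G pG' pD' ≤
          C * (‖pG - pG'‖ + ‖pD - pD'‖) := by
    intro pG hpG pG' hpG' pD pD' hpD hpD'
    nlinarith [loadShedCost_le_add (fun j ↦ (hc j).le) hG hM₂ hr (hball pG hpG) hpG' hpD hpD',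
      norm_nonneg (pG - pG'), norm_nonneg (pD - pD')]
  refine ⟨C, by positivity, fun pG hpG pG' hpG' pD pD' hpD hpD' ↦
    abs_sub_le_iff.2 ⟨key pG hpG pG' hpG' pD pD' hpD hpD', ?_⟩⟩
  rw [norm_sub_rev pG, norm_sub_rev pD]
  exact key pG' hpG' pG hpG pD' pD hpD' hpD

/-- the minimal load-shedding cost `Φ_G` is Lipschitz on
`D_G × ℝ^{n_L}_+`. -/
theorem loadShedCost_lipschitz {nG nL : ℕ} (hnG : 1 ≤ nG) (hnL : 1 ≤ nL)
    (DG : Set (EuclideanSpace ℝ (Fin nG))) (hDGne : DG.Nonempty)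
    (hDGconv : Convex ℝ DG) (hDGcomp : IsCompact DG)
    (c : EuclideanSpace ℝ (Fin nL)) (hc : ∀ j, 0 < c j)
    (G : Set (EuclideanSpace ℝ (Fin nG) × EuclideanSpace ℝ (Fin nL)))
    (hG : IsAdmissibleFeasibilitySet DG G) :
    ∃ C₂ : ℝ, 0 < C₂ ∧
      ∀ pG ∈ DG, ∀ pG' ∈ DG, ∀ pD pD' : EuclideanSpace ℝ (Fin nL),
        (∀ j, 0 ≤ pD j) → (∀ j, 0 ≤ pD' j) →
          |loadShedCost c G pG pD - loadShedCost c G pG' pD'| ≤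
            C₂ * (‖pG - pG'‖ + ‖pD - pD'‖) :=
  loadShedCost_lipschitz_general DG hDGcomp c hc G hG
end

section
/- Let G be an admissible feasibility set, let (p_G, p_D) ∈ D_G × ℝ^{n_L}_+, and let z* ∈ ℝ^{n_L}_+ with (p_G, p_D − z*) ∈ G satisfy c^⊤ z* = Φ_G(p_G, p_D) (i.e. z* is an optimal load disruption) and c^⊤ z* > 0. Then there exists a vector η = (η_G, η_L) ∈ ℝ^{n_G} × ℝ^{n_L} with Euclidean norm ‖η‖ = 1 such that: η_G^⊤ (p̂_G − p_G) + η_L^⊤ (p̂_D − (p_D − z*)) ≤ 0 for every (p̂_G, p̂_D) ∈ G; all coordinates of η_L are nonnegative; and η_{L,j} > 0 for at least one index j. -/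
/-!
Optimality of `z*` means that no interior point of `G` lies on the upward cone
`{p_G} × (p_D − z* + ℝ^{n_L}_+)`: from such a point one could raise slightly a load `j` with
`z*_j > 0`, stay in `G`, and by load over-satisfaction shed strictly less.
Hahn–Banach separates the interior of `G` from this cone. As `G` is convex with nonempty
interior, the separating functional supports all of `G` at `(p_G, p_D − z*)`; it is nonnegative
on the cone directions, and its load part is nonzero because the functional is strictly smaller
at an interior point of the slice over `p_G`. Normalising its coefficient vector gives `η`.
-/

open scoped BigOperators

open Set Filter Topology

section ProdNormed

variable {E F : Type*} [NormedAddCommGroup E] [NormedSpace ℝ E] [NormedAddCommGroup F]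
  [NormedSpace ℝ F]

theorem Convex.exists_supporting_clm_of_disjoint_interior
    {s : Set (E × F)} (hs : Convex ℝ s) {x : E × F} (hx : x ∈ s) {K : Set F} (hK : Convex ℝ K)
    (hK0 : 0 ∈ K) (hdisj : Disjoint (interior s) ((fun v => x + (0, v)) '' K))
    {y : F} (hy : (x.1, y) ∈ interior s) :
    ∃ f : E × F →L[ℝ] ℝ, (∀ p ∈ s, f p ≤ f x) ∧ (∀ v ∈ K, 0 ≤ f (0, v)) ∧ f (0, y - x.2) < 0 := by
  have hKx : Convex ℝ ((fun v => x + (0, v)) '' K) := by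
    simpa [image_image] using (hK.linear_image (LinearMap.inr ℝ E F)).translate x
  obtain ⟨f, u, hlt, hge⟩ := geometric_hahn_banach_open hs.interior isOpen_interior hKx hdisj
  have hle : ∀ p ∈ s, f p ≤ u := fun p hp =>
    closure_minimal (fun q hq => (hlt q hq).le) (isClosed_le f.continuous continuous_const)
      ((hs.closure_interior_eq_closure_of_nonempty_interior ⟨_, hy⟩).symm ▸ subset_closure hp)
  have hfx : f x = u := le_antisymm (hle x hx) (hge x ⟨0, hK0, by simp⟩)
  refine ⟨f, fun p hp => hfx ▸ hle p hp, fun v hv => ?_, ?_⟩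
  · have := hge _ ⟨v, hv, rfl⟩
    rw [map_add] at this
    linarith
  · have := hlt _ hy
    have hsplit : ((x.1, y) : E × F) = x + (0, y - x.2) := by ext <;> simp
    rw [hsplit, map_add] at this
    linarith

lemma exists_pos_sq_norm_smul_add_sq_norm_smul_eq_one (a : E) (b : F) (hb : b ≠ 0) :
    ∃ r : ℝ, 0 < r ∧ ‖r • a‖ ^ 2 + ‖r • b‖ ^ 2 = 1 := by
  have hS : 0 < ‖a‖ ^ 2 + ‖b‖ ^ 2 := by positivity
  refine ⟨(√(‖a‖ ^ 2 + ‖b‖ ^ 2))⁻¹, by positivity, ?_⟩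
  rw [norm_smul, norm_smul, mul_pow, mul_pow, ← mul_add, Real.norm_eq_abs, sq_abs, inv_pow,
    Real.sq_sqrt hS.le, inv_mul_cancel₀ hS.ne']

end ProdNormed

lemma EuclideanSpace.exists_clm_prod_apply_eq_sum {ι κ : Type*} [Fintype ι] [Fintype κ]
    (f : EuclideanSpace ℝ ι × EuclideanSpace ℝ κ →L[ℝ] ℝ) :
    ∃ (a : EuclideanSpace ℝ ι) (b : EuclideanSpace ℝ κ),
      ∀ p, f p = ∑ i, a i * p.1 i + ∑ j, b j * p.2 j := by
  refine ⟨(InnerProductSpace.toDual ℝ _).symm (f.comp (.inl ℝ _ _)),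
    (InnerProductSpace.toDual ℝ _).symm (f.comp (.inr ℝ _ _)), fun p => ?_⟩
  have ha := InnerProductSpace.toDual_symm_apply (x := p.1) (y := f.comp (.inl ℝ _ _))
  have hb := InnerProductSpace.toDual_symm_apply (x := p.2) (y := f.comp (.inr ℝ _ _))
  simp only [PiLp.inner_apply, RCLike.inner_apply', conj_trivial] at ha hb
  rw [← f.comp_inl_add_comp_inr, ← ha, ← hb]

lemma eventually_add_smul_mem_of_mem_interior {E : Type*} [AddCommGroup E] [TopologicalSpace E]
    [IsTopologicalAddGroup E] [Module ℝ E] [ContinuousSMul ℝ E] {s : Set E} {x : E}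
    (hx : x ∈ interior s) (v : E) : ∀ᶠ t : ℝ in 𝓝 0, x + t • v ∈ s := by
  have : Tendsto (fun t : ℝ => x + t • v) (𝓝 0) (𝓝 x) := by
    simpa using ((continuous_id.smul continuous_const).const_add x).tendsto (0 : ℝ)
  exact this.eventually (mem_interior_iff_mem_nhds.1 hx)

def nonnegOrthant (ι : Type*) : Set (EuclideanSpace ℝ ι) := {v | ∀ j, 0 ≤ v j}

lemma convex_nonnegOrthant (ι : Type*) : Convex ℝ (nonnegOrthant ι) :=
  fun _ hx _ hy _ _ ha hb _ j => by
    simpa using add_nonneg (mul_nonneg ha (hx j)) (mul_nonneg hb (hy j))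

lemma zero_mem_nonnegOrthant (ι : Type*) : 0 ∈ nonnegOrthant ι := fun _ => le_rfl

section LoadShedding

variable {nG nL : ℕ} {c : EuclideanSpace ℝ (Fin nL)}
  {G : Set (EuclideanSpace ℝ (Fin nG) × EuclideanSpace ℝ (Fin nL))}
  {pG : EuclideanSpace ℝ (Fin nG)} {pD z : EuclideanSpace ℝ (Fin nL)}

lemma loadShedCost_le (hc : ∀ j, 0 ≤ c j) (hz : ∀ j, 0 ≤ z j) (hzG : (pG, pD - z) ∈ G) :
    loadShedCost c G pG pD ≤ ∑ j, c j * z j := by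
  refine csInf_le ⟨0, ?_⟩ ⟨z, hz, hzG, rfl⟩
  rintro t ⟨z', hz', -, rfl⟩
  exact Finset.sum_nonneg fun j _ => mul_nonneg (hc j) (hz' j)

lemma add_smul_single_notMem_of_optimal (hc : ∀ j, 0 < c j) (hz : ∀ j, 0 ≤ z j)
    (hopt : ∑ j, c j * z j = loadShedCost c G pG pD) {j₀ : Fin nL} {t : ℝ} (ht : 0 < t)
    (htz : t ≤ z j₀) : (pG, pD - z + t • EuclideanSpace.single j₀ 1) ∉ G := by
  intro hmem
  set z' := z - t • EuclideanSpace.single j₀ (1 : ℝ)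
  have hz' : ∀ j, 0 ≤ z' j := fun j => by
    by_cases h : j = j₀ <;> simp [z', h, hz j, htz]
  have hcost : ∑ j, c j * z' j = ∑ j, c j * z j - t * c j₀ := by
    simp [z', mul_sub, Finset.sum_sub_distrib, mul_comm]
  have hfeas : (pG, pD - z') ∈ G := by rwa [sub_sub_eq_add_sub, add_sub_right_comm]
  have hle := loadShedCost_le (fun j => (hc j).le) hz' hfeas
  linarith [mul_pos ht (hc j₀)]

lemma IsAdmissibleFeasibilitySet.disjoint_interior_of_optimal
    {DG : Set (EuclideanSpace ℝ (Fin nG))} (hG : IsAdmissibleFeasibilitySet DG G)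
    (hc : ∀ j, 0 < c j) (hz : ∀ j, 0 ≤ z j)
    (hzG : (pG, pD - z) ∈ G) (hopt : ∑ j, c j * z j = loadShedCost c G pG pD)
    (hpos : 0 < ∑ j, c j * z j) :
    Disjoint (interior G) ((fun v => (pG, pD - z) + (0, v)) '' nonnegOrthant (Fin nL)) := by
  obtain ⟨j₀, -, hcz⟩ := Finset.exists_lt_of_sum_lt (s := Finset.univ) (f := fun _ => (0 : ℝ))
    (by simpa using hpos)
  have hj₀ : 0 < z j₀ := lt_of_mul_lt_mul_left (by simpa using hcz) (hc j₀).le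
  rw [Set.disjoint_left]
  rintro _ hint ⟨v, hv, rfl⟩
  obtain ⟨t, hmem, ht_pos, ht_le⟩ :=
    (((eventually_add_smul_mem_of_mem_interior hint (0, EuclideanSpace.single j₀ 1)).filter_mono
      nhdsWithin_le_nhds).and (Ioc_mem_nhdsGT hj₀)).exists
  simp only [Prod.mk_add_mk, Prod.smul_mk, smul_zero, add_zero] at hmem
  refine add_smul_single_notMem_of_optimal hc hz hopt ht_pos ht_le (hG.oversat _ _ hmem _ ?_ ?_)
  · intro j
    have hshift : 0 ≤ (t • EuclideanSpace.single j₀ (1 : ℝ)) j := by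
      by_cases h : j = j₀ <;> simp [h, ht_pos.le]
    rw [PiLp.add_apply]
    exact add_nonneg (hG.snd_nonneg _ hzG j) hshift
  · intro j
    simpa using hv j

end LoadShedding

theorem exists_supporting_vector_general {nG nL : ℕ}
    (DG : Set (EuclideanSpace ℝ (Fin nG)))
    (c : EuclideanSpace ℝ (Fin nL)) (hc : ∀ j, 0 < c j)
    (G : Set (EuclideanSpace ℝ (Fin nG) × EuclideanSpace ℝ (Fin nL)))
    (hG : IsAdmissibleFeasibilitySet DG G)
    (pG : EuclideanSpace ℝ (Fin nG)) (hpG : pG ∈ DG)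
    (pD : EuclideanSpace ℝ (Fin nL))
    (zstar : EuclideanSpace ℝ (Fin nL)) (hzstar_nonneg : ∀ j, 0 ≤ zstar j)
    (hzstar_mem : (pG, pD - zstar) ∈ G)
    (hzstar_opt : ∑ j, c j * zstar j = loadShedCost c G pG pD)
    (hzstar_pos : 0 < ∑ j, c j * zstar j) :
    ∃ (ηG : EuclideanSpace ℝ (Fin nG)) (ηL : EuclideanSpace ℝ (Fin nL)),
      ‖ηG‖ ^ 2 + ‖ηL‖ ^ 2 = 1 ∧
      (∀ p ∈ G,
        (∑ k, ηG k * (p.1 k - pG k)) + (∑ j, ηL j * (p.2 j - (pD j - zstar j))) ≤ 0) ∧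
      (∀ j, 0 ≤ ηL j) ∧ (∃ j, 0 < ηL j) := by
  obtain ⟨pD₀, hpD₀⟩ := hG.interior_slice pG hpG
  obtain ⟨f, hsupp, hf_nonneg, hf_neg⟩ :=
    hG.convex.exists_supporting_clm_of_disjoint_interior hzstar_mem
      (convex_nonnegOrthant _) (zero_mem_nonnegOrthant _)
      (hG.disjoint_interior_of_optimal hc hzstar_nonneg hzstar_mem hzstar_opt hzstar_pos) hpD₀
  obtain ⟨a, b, hf⟩ := EuclideanSpace.exists_clm_prod_apply_eq_sum f
  have hb_nonneg : ∀ j, 0 ≤ b j := fun j => by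
    simpa [hf] using hf_nonneg (EuclideanSpace.single j 1) fun i => by
      by_cases h : i = j <;> simp [h]
  obtain ⟨j₀, hj₀⟩ : ∃ j, 0 < b j := by
    by_contra! h
    have hb : b = 0 := by ext j; exact le_antisymm (h j) (hb_nonneg j)
    simp [hf, hb] at hf_neg
  obtain ⟨r, hr, hnorm⟩ :=
    exists_pos_sq_norm_smul_add_sq_norm_smul_eq_one a b fun hb => by simp [hb] at hj₀
  refine ⟨r • a, r • b, hnorm, fun p hp => ?_, fun j => ?_, j₀, ?_⟩
  · have hfp := hsupp p hp
    rw [hf, hf] at hfp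
    simp only [PiLp.smul_apply, PiLp.sub_apply, smul_eq_mul, mul_assoc, ← Finset.mul_sum,
      mul_sub, Finset.sum_sub_distrib] at hfp ⊢
    linarith [mul_le_mul_of_nonneg_left hfp hr.le]
  · simpa using mul_nonneg hr.le (hb_nonneg j)
  · simpa using mul_pos hr hj₀

/-- at an optimal load disruption `z*` with strictly positive cost there is a
supporting unit vector `η = (η_G, η_L)` of `G` at `(p_G, p_D − z*)` with `η_L ≥ 0` and
`η_{L,j} > 0` for some `j`. -/
theorem exists_supporting_vector {nG nL : ℕ} (hnG : 1 ≤ nG) (hnL : 1 ≤ nL)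
    (DG : Set (EuclideanSpace ℝ (Fin nG))) (hDGne : DG.Nonempty)
    (hDGconv : Convex ℝ DG) (hDGcomp : IsCompact DG)
    (c : EuclideanSpace ℝ (Fin nL)) (hc : ∀ j, 0 < c j)
    (G : Set (EuclideanSpace ℝ (Fin nG) × EuclideanSpace ℝ (Fin nL)))
    (hG : IsAdmissibleFeasibilitySet DG G)
    (pG : EuclideanSpace ℝ (Fin nG)) (hpG : pG ∈ DG)
    (pD : EuclideanSpace ℝ (Fin nL)) (hpD : ∀ j, 0 ≤ pD j)
    (zstar : EuclideanSpace ℝ (Fin nL)) (hzstar_nonneg : ∀ j, 0 ≤ zstar j)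
    (hzstar_mem : (pG, pD - zstar) ∈ G)
    (hzstar_opt : ∑ j, c j * zstar j = loadShedCost c G pG pD)
    (hzstar_pos : 0 < ∑ j, c j * zstar j) :
    ∃ (ηG : EuclideanSpace ℝ (Fin nG)) (ηL : EuclideanSpace ℝ (Fin nL)),
      ‖ηG‖ ^ 2 + ‖ηL‖ ^ 2 = 1 ∧
      (∀ p ∈ G,
        (∑ k, ηG k * (p.1 k - pG k)) + (∑ j, ηL j * (p.2 j - (pD j - zstar j))) ≤ 0) ∧
      (∀ j, 0 ≤ ηL j) ∧ (∃ j, 0 < ηL j) :=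
  exists_supporting_vector_general DG c hc G hG pG hpG pD zstar hzstar_nonneg hzstar_mem hzstar_opt
    hzstar_pos
end

section
/- Let G_0, …, G_{n_c} be admissible feasibility sets, let q_0, …, q_{n_c} ≥ 0, and let C_G : D_G → ℝ be continuous. Define the running cost g(x, p_G) := C_G(p_G) + Σ_{i=0}^{n_c} q_i Φ_{G_i}(p_G, x^+) for x ∈ ℝ^{n_L} and p_G ∈ D_G, where x^+ denotes the componentwise positive part of x. Then there exists a constant C₁ > 0 such that |g(x, p_G)| ≤ C₁ (1 + ‖x‖) for all x ∈ ℝ^{n_L} and all p_G ∈ D_G, where ‖·‖ denotes the Euclidean norm. -/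
open scoped BigOperators

/-- The componentwise positive part `x⁺` of `x ∈ ℝ^{n_L}`. -/
noncomputable def posPart {nL : ℕ} (x : EuclideanSpace ℝ (Fin nL)) :
    EuclideanSpace ℝ (Fin nL) :=
  (EuclideanSpace.equiv (Fin nL) ℝ).symm (fun j => max (x j) 0)

/-!
Shedding the whole load is always feasible, since (A), (B) and (D) put `(p_G, 0)` in `G`; hence
`0 ≤ Φ_G(p_G, x⁺) ≤ c^⊤ x⁺ ≤ (∑ⱼ cⱼ) ‖x‖`. The term `C_G(p_G)` is bounded because `C_G` is
continuous on the compact set `D_G`.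
-/

section LoadShedCost

variable {nG nL : ℕ} {c : EuclideanSpace ℝ (Fin nL)}
  {G : Set (EuclideanSpace ℝ (Fin nG) × EuclideanSpace ℝ (Fin nL))}
  {pG : EuclideanSpace ℝ (Fin nG)} {pD : EuclideanSpace ℝ (Fin nL)}

theorem loadShedCost_nonneg (hc : ∀ j, 0 ≤ c j) : 0 ≤ loadShedCost c G pG pD :=
  Real.sInf_nonneg <| by
    rintro t ⟨z, hz, -, rfl⟩
    exact Finset.sum_nonneg fun j _ => mul_nonneg (hc j) (hz j)

theorem loadShedCost_le_of_mem_zero (hc : ∀ j, 0 ≤ c j) (hpD : ∀ j, 0 ≤ pD j)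
    (hzero : (pG, 0) ∈ G) : loadShedCost c G pG pD ≤ ∑ j, c j * pD j := by
  refine csInf_le ⟨0, ?_⟩ ⟨pD, hpD, by rwa [sub_self], rfl⟩
  rintro t ⟨z, hz, -, rfl⟩
  exact Finset.sum_nonneg fun j _ => mul_nonneg (hc j) (hz j)

theorem IsAdmissibleFeasibilitySet.mem_zero {DG : Set (EuclideanSpace ℝ (Fin nG))}
    (hG : IsAdmissibleFeasibilitySet DG G) (hpG : pG ∈ DG) : (pG, 0) ∈ G := by
  obtain ⟨z, -, hmem⟩ := hG.shed pG hpG 0 fun _ => le_rfl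
  exact hG.oversat pG _ hmem 0 (fun _ => le_rfl) (hG.snd_nonneg _ hmem)

end LoadShedCost

section PosPart

variable {nL : ℕ}

theorem posPart_apply (x : EuclideanSpace ℝ (Fin nL)) (j : Fin nL) :
    posPart x j = max (x j) 0 :=
  rfl

theorem posPart_apply_nonneg (x : EuclideanSpace ℝ (Fin nL)) (j : Fin nL) : 0 ≤ posPart x j :=
  le_max_right _ _

theorem posPart_apply_le_norm (x : EuclideanSpace ℝ (Fin nL)) (j : Fin nL) :
    posPart x j ≤ ‖x‖ := by
  rw [posPart_apply]
  exact max_le ((le_abs_self _).trans (PiLp.norm_apply_le x j)) (norm_nonneg x)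

theorem sum_mul_posPart_le {c : EuclideanSpace ℝ (Fin nL)} (hc : ∀ j, 0 ≤ c j)
    (x : EuclideanSpace ℝ (Fin nL)) :
    ∑ j, c j * posPart x j ≤ (∑ j, c j) * ‖x‖ := by
  rw [Finset.sum_mul]
  exact Finset.sum_le_sum fun j _ => mul_le_mul_of_nonneg_left (posPart_apply_le_norm x j) (hc j)

end PosPart

theorem IsAdmissibleFeasibilitySet.loadShedCost_posPart_le {nG nL : ℕ}
    {DG : Set (EuclideanSpace ℝ (Fin nG))}
    {G : Set (EuclideanSpace ℝ (Fin nG) × EuclideanSpace ℝ (Fin nL))}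
    (hG : IsAdmissibleFeasibilitySet DG G) {c : EuclideanSpace ℝ (Fin nL)} (hc : ∀ j, 0 ≤ c j)
    {pG : EuclideanSpace ℝ (Fin nG)} (hpG : pG ∈ DG) (x : EuclideanSpace ℝ (Fin nL)) :
    loadShedCost c G pG (posPart x) ≤ (∑ j, c j) * ‖x‖ :=
  (loadShedCost_le_of_mem_zero hc (posPart_apply_nonneg x) (hG.mem_zero hpG)).trans
    (sum_mul_posPart_le hc x)

theorem runningCost_linear_growth_general {nG nL nc : ℕ}
    (DG : Set (EuclideanSpace ℝ (Fin nG)))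
    (hDGcomp : IsCompact DG)
    (c : EuclideanSpace ℝ (Fin nL)) (hc : ∀ j, 0 < c j)
    (G : Fin (nc + 1) → Set (EuclideanSpace ℝ (Fin nG) × EuclideanSpace ℝ (Fin nL)))
    (hG : ∀ i, IsAdmissibleFeasibilitySet DG (G i))
    (q : Fin (nc + 1) → ℝ) (hq : ∀ i, 0 ≤ q i)
    (CG : EuclideanSpace ℝ (Fin nG) → ℝ) (hCG : ContinuousOn CG DG) :
    ∃ C₁ : ℝ, 0 < C₁ ∧
      ∀ x : EuclideanSpace ℝ (Fin nL), ∀ pG ∈ DG,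
        |CG pG + ∑ i, q i * loadShedCost c (G i) pG (posPart x)| ≤ C₁ * (1 + ‖x‖) := by
  have hc' : ∀ j, 0 ≤ c j := fun j => (hc j).le
  obtain ⟨M, hM⟩ := hDGcomp.exists_bound_of_continuousOn hCG
  set K := (∑ i, q i) * ∑ j, c j
  have hK : 0 ≤ K := mul_nonneg (Finset.sum_nonneg fun i _ => hq i)
    (Finset.sum_nonneg fun j _ => hc' j)
  refine ⟨|M| + K + 1, by positivity, fun x pG hpG => ?_⟩
  set Φ := ∑ i, q i * loadShedCost c (G i) pG (posPart x)
  have hΦ_nonneg : 0 ≤ Φ :=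
    Finset.sum_nonneg fun i _ => mul_nonneg (hq i) (loadShedCost_nonneg hc')
  have hΦ_le : Φ ≤ K * ‖x‖ := by
    rw [mul_assoc, Finset.sum_mul]
    exact Finset.sum_le_sum fun i _ =>
      mul_le_mul_of_nonneg_left ((hG i).loadShedCost_posPart_le hc' hpG x) (hq i)
  calc |CG pG + Φ| ≤ |CG pG| + |Φ| := abs_add_le _ _
    _ ≤ |M| + K * ‖x‖ := by
      rw [abs_of_nonneg hΦ_nonneg]
      exact add_le_add ((hM pG hpG).trans (le_abs_self M)) hΦ_le
    _ ≤ (|M| + K + 1) * (1 + ‖x‖) := by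
      nlinarith [abs_nonneg M, norm_nonneg x, mul_nonneg (abs_nonneg M) (norm_nonneg x)]

/-- the running cost
`g(x, p_G) = C_G(p_G) + Σ_i q_i Φ_{G_i}(p_G, x⁺)` has linear growth in `x`,
uniformly in `p_G ∈ D_G`. -/
theorem runningCost_linear_growth {nG nL nc : ℕ} (hnG : 1 ≤ nG) (hnL : 1 ≤ nL)
    (DG : Set (EuclideanSpace ℝ (Fin nG))) (hDGne : DG.Nonempty)
    (hDGconv : Convex ℝ DG) (hDGcomp : IsCompact DG)
    (c : EuclideanSpace ℝ (Fin nL)) (hc : ∀ j, 0 < c j)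
    (G : Fin (nc + 1) → Set (EuclideanSpace ℝ (Fin nG) × EuclideanSpace ℝ (Fin nL)))
    (hG : ∀ i, IsAdmissibleFeasibilitySet DG (G i))
    (q : Fin (nc + 1) → ℝ) (hq : ∀ i, 0 ≤ q i)
    (CG : EuclideanSpace ℝ (Fin nG) → ℝ) (hCG : ContinuousOn CG DG) :
    ∃ C₁ : ℝ, 0 < C₁ ∧
      ∀ x : EuclideanSpace ℝ (Fin nL), ∀ pG ∈ DG,
        |CG pG + ∑ i, q i * loadShedCost c (G i) pG (posPart x)| ≤ C₁ * (1 + ‖x‖) :=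
  runningCost_linear_growth_general DG hDGcomp c hc G hG q hq CG hCG
end

section
/- Let n ≥ 1 and let c, η ∈ ℝⁿ both have all coordinates strictly positive, and let y, x, d be real numbers. Then the infimum of c^⊤ z over all z ∈ ℝⁿ with z ≥ 0 componentwise and y + x − η^⊤ z ≤ d equals max(0, y + x − d) · min_{1 ≤ k ≤ n} (c_k / η_k), and this infimum is attained. -/
open scoped Matrix

/-!
Weak duality: if `m • η ≤ c` with `m ≥ 0`, then every feasible `z ≥ 0` costs
`c ⬝ᵥ z ≥ m * (η ⬝ᵥ z) ≥ m * max 0 s`. The best such `m` is the smallest ratio `c k / η k`,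
and putting the whole shortfall `max 0 s` on a coordinate `k` achieving it attains the bound.
-/

section LoadShedding

variable {ι : Type*} [Fintype ι] {c η : ι → ℝ}

theorem max_zero_mul_le_dotProduct {m s : ℝ} {z : ι → ℝ} (hm : 0 ≤ m) (hmc : m • η ≤ c)
    (hη : 0 ≤ η) (hz : 0 ≤ z) (hs : s ≤ η ⬝ᵥ z) : max 0 s * m ≤ c ⬝ᵥ z :=
  calc max 0 s * m ≤ (η ⬝ᵥ z) * m :=
        mul_le_mul_of_nonneg_right (max_le (dotProduct_nonneg_of_nonneg hη hz) hs) hm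
    _ = (m • η) ⬝ᵥ z := by rw [smul_dotProduct, smul_eq_mul, mul_comm]
    _ ≤ c ⬝ᵥ z := dotProduct_le_dotProduct_of_nonneg_right hmc hz

theorem dotProduct_single_div [DecidableEq ι] {k : ι} (hk : η k ≠ 0) (t : ℝ) :
    η ⬝ᵥ Pi.single k (t / η k) = t ∧ c ⬝ᵥ Pi.single k (t / η k) = t * (c k / η k) := by
  simp only [dotProduct_single]
  constructor <;> field_simp

theorem isLeast_min_cost_dotProduct_ge [Nonempty ι] (hc : 0 ≤ c) (hη : ∀ k, 0 < η k) (s : ℝ) :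
    IsLeast ((c ⬝ᵥ ·) '' {z | 0 ≤ z ∧ s ≤ η ⬝ᵥ z}) (max 0 s * ⨅ k, c k / η k) := by
  classical
  set m := ⨅ k, c k / η k
  have hm : 0 ≤ m := le_ciInf fun k => div_nonneg (hc k) (hη k).le
  have hmc : m • η ≤ c := fun k =>
    (le_div_iff₀ (hη k)).mp (ciInf_le (Set.finite_range _).bddBelow k)
  obtain ⟨k, hk⟩ := exists_eq_ciInf_of_finite (f := fun k => c k / η k)
  obtain ⟨hηz, hcz⟩ := dotProduct_single_div (c := c) (hη k).ne' (max 0 s)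
  refine ⟨⟨Pi.single k (max 0 s / η k), ⟨?_, ?_⟩, ?_⟩, ?_⟩
  · exact Pi.single_nonneg.mpr (div_nonneg (le_max_left 0 s) (hη k).le :)
  · exact hηz.symm ▸ le_max_right 0 s
  · exact hcz.trans (congrArg _ hk)
  · rintro _ ⟨z, ⟨hz, hs⟩, rfl⟩
    exact max_zero_mul_le_dotProduct hm hmc (fun k => (hη k).le) hz hs

end LoadShedding

/-- closed form of the scalar load-shedding problem.  For `c, η > 0`
componentwise, the infimum of `c^⊤ z` over `z ≥ 0` with `y + x − η^⊤ z ≤ d` is attained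
and equals `max(0, y + x − d) · min_k (c_k / η_k)`. -/
theorem scalar_loadShed_closed_form {n : ℕ} (hn : 1 ≤ n)
    (c η : EuclideanSpace ℝ (Fin n)) (hc : ∀ k, 0 < c k) (hη : ∀ k, 0 < η k)
    (y x d : ℝ) :
    IsLeast
      {t : ℝ | ∃ z : EuclideanSpace ℝ (Fin n),
        (∀ k, 0 ≤ z k) ∧ y + x - ∑ k, η k * z k ≤ d ∧ t = ∑ k, c k * z k}
      (max 0 (y + x - d) * sInf (Set.range fun k : Fin n => c k / η k)) := by
  have : Nonempty (Fin n) := Fin.pos_iff_nonempty.mp hn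
  convert isLeast_min_cost_dotProduct_ge (c := c.ofLp) (fun k => (hc k).le) hη (y + x - d) using 1
  swap; · rfl
  ext t
  constructor
  · rintro ⟨z, hz, hs, rfl⟩
    exact ⟨z.ofLp, ⟨hz, by simp only [dotProduct]; linarith⟩, rfl⟩
  · rintro ⟨z, ⟨hz, hs⟩, rfl⟩
    exact ⟨WithLp.toLp 2 z, hz, by simp only [dotProduct] at hs ⊢; linarith, rfl⟩
end

section
/- Let n_G ≥ 1, n_L ≥ 1, let c ∈ ℝ^{n_L} and η_L ∈ ℝ^{n_L} both have all coordinates strictly positive, let η_G ∈ ℝ^{n_G}, let d ∈ ℝ, and let G ⊆ ℝ^{n_G} × ℝ^{n_L} satisfy η_G^⊤ u + η_L^⊤ v ≤ d for all (u, v) ∈ G. Then for every p_G ∈ ℝ^{n_G}, every x ∈ ℝ^{n_L}, and every z ∈ ℝ^{n_L} with z ≥ 0 componentwise and (p_G, x − z) ∈ G, one has c^⊤ z ≥ max(0, η_G^⊤ p_G + η_L^⊤ x − d) · min_{1 ≤ k ≤ n_L} (c_k / η_{L,k}). -/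
open Finset

lemma sInf_range_div_mul_le {ι : Type*} [Finite ι] {c η : ι → ℝ} (hη : ∀ k, 0 < η k) (k : ι) :
    sInf (Set.range fun k => c k / η k) * η k ≤ c k :=
  (le_div_iff₀ (hη k)).1 (csInf_le (Set.finite_range _).bddBelow ⟨k, rfl⟩)

lemma sInf_range_div_mul_sum_le {ι : Type*} [Fintype ι] {c η z : ι → ℝ}
    (hη : ∀ k, 0 < η k) (hz : ∀ k, 0 ≤ z k) :
    sInf (Set.range fun k => c k / η k) * ∑ k, η k * z k ≤ ∑ k, c k * z k := by
  rw [mul_sum]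
  refine sum_le_sum fun k _ => ?_
  rw [← mul_assoc]
  exact mul_le_mul_of_nonneg_right (sInf_range_div_mul_le hη k) (hz k)

theorem relaxed_loadShed_lower_bound_general {nG nL : ℕ}
    (c ηL : EuclideanSpace ℝ (Fin nL)) (hc : ∀ k, 0 < c k) (hηL : ∀ k, 0 < ηL k)
    (ηG : EuclideanSpace ℝ (Fin nG)) (d : ℝ)
    (G : Set (EuclideanSpace ℝ (Fin nG) × EuclideanSpace ℝ (Fin nL)))
    (hG : ∀ p ∈ G, (∑ k, ηG k * p.1 k) + (∑ k, ηL k * p.2 k) ≤ d) :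
    ∀ pG : EuclideanSpace ℝ (Fin nG), ∀ x z : EuclideanSpace ℝ (Fin nL),
      (∀ k, 0 ≤ z k) → (pG, x - z) ∈ G →
        max 0 ((∑ k, ηG k * pG k) + (∑ k, ηL k * x k) - d) *
            sInf (Set.range fun k : Fin nL => c k / ηL k) ≤
          ∑ k, c k * z k := by
  intro pG x z hz hmem
  have hshed : (∑ k, ηG k * pG k) + (∑ k, ηL k * x k) - d ≤ ∑ k, ηL k * z k := by
    have hfeas := hG _ hmem
    simp only [PiLp.sub_apply, mul_sub, sum_sub_distrib] at hfeas
    linarith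
  have hratio_nonneg : 0 ≤ sInf (Set.range fun k : Fin nL => c k / ηL k) :=
    Real.sInf_nonneg (by rintro _ ⟨k, rfl⟩; exact (div_pos (hc k) (hηL k)).le)
  calc max 0 ((∑ k, ηG k * pG k) + (∑ k, ηL k * x k) - d) *
        sInf (Set.range fun k : Fin nL => c k / ηL k)
      ≤ (∑ k, ηL k * z k) * sInf (Set.range fun k : Fin nL => c k / ηL k) := by
        gcongr
        exact max_le (sum_nonneg fun k _ => mul_nonneg (hηL k).le (hz k)) hshed
    _ ≤ ∑ k, c k * z k := by
        rw [mul_comm]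
        exact sInf_range_div_mul_sum_le hηL hz

/-- if `G` is contained in the half-space
`{(u, v) : η_G^⊤ u + η_L^⊤ v ≤ d}`, then the relaxed scalar load-shedding cost
`max(0, η_G^⊤ p_G + η_L^⊤ x − d) · min_k (c_k / η_{L,k})` is a lower bound for `c^⊤ z`
for every feasible load disruption `z`. -/
theorem relaxed_loadShed_lower_bound {nG nL : ℕ} (hnG : 1 ≤ nG) (hnL : 1 ≤ nL)
    (c ηL : EuclideanSpace ℝ (Fin nL)) (hc : ∀ k, 0 < c k) (hηL : ∀ k, 0 < ηL k)
    (ηG : EuclideanSpace ℝ (Fin nG)) (d : ℝ)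
    (G : Set (EuclideanSpace ℝ (Fin nG) × EuclideanSpace ℝ (Fin nL)))
    (hG : ∀ p ∈ G, (∑ k, ηG k * p.1 k) + (∑ k, ηL k * p.2 k) ≤ d) :
    ∀ pG : EuclideanSpace ℝ (Fin nG), ∀ x z : EuclideanSpace ℝ (Fin nL),
      (∀ k, 0 ≤ z k) → (pG, x - z) ∈ G →
        max 0 ((∑ k, ηG k * pG k) + (∑ k, ηL k * x k) - d) *
            sInf (Set.range fun k : Fin nL => c k / ηL k) ≤
          ∑ k, c k * z k :=
  relaxed_loadShed_lower_bound_general c ηL hc hηL ηG d G hG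
end

section
/- Let n ≥ 1, let c ∈ ℝⁿ have all coordinates strictly positive, let σ be a real n × n matrix, and let y ≥ d ≥ 0 be real numbers. Then max over x̃ ∈ ℝⁿ with ‖x̃‖ = y of ( min over x̂ ∈ ℝⁿ with ‖x̂‖ ≤ d of c^⊤ (σ(x̃ − x̂))^+ ) equals (y − d) · max_{‖ξ‖ = 1} c^⊤ (σξ)^+. -/
/-!
The map `Φ v = c^⊤ (σ v)^+` is sublinear (positively homogeneous and subadditive) because
`c > 0` and `t ↦ t^+` is. With `M = max_{‖ξ‖ = 1} Φ ξ`, homogeneity gives `Φ v ≤ ‖v‖ M`.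
For `‖x̃‖ = y`, shrinking `x̃` radially by `d` gives the upper bound `(y - d) M` for the inner
minimum; for `x̃ = y ξ` with `ξ` a maximiser, subadditivity gives
`Φ (x̃ - x̂) ≥ Φ x̃ - Φ x̂ ≥ y M - d M`, so the bound is attained.
-/

section Sublinear

variable {E : Type*} [NormedAddCommGroup E] [NormedSpace ℝ E] {F : E → ℝ} {M : ℝ}

theorem map_zero_of_posHomogeneous (hom : ∀ a : ℝ, 0 ≤ a → ∀ v, F (a • v) = a * F v) :
    F 0 = 0 := by
  simpa using hom 0 le_rfl 0

theorem le_norm_mul_of_forall_sphere_le (hom : ∀ a : ℝ, 0 ≤ a → ∀ v, F (a • v) = a * F v)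
    (hM : ∀ ξ, ‖ξ‖ = 1 → F ξ ≤ M) (v : E) : F v ≤ ‖v‖ * M := by
  rcases eq_or_ne v 0 with rfl | hv
  · simp [map_zero_of_posHomogeneous hom]
  have hv' : 0 < ‖v‖ := norm_pos_iff.mpr hv
  calc F v = ‖v‖ * F (‖v‖⁻¹ • v) := by
        rw [← hom _ hv'.le, smul_smul, mul_inv_cancel₀ hv'.ne', one_smul]
    _ ≤ ‖v‖ * M := by
        gcongr
        exact hM _ (norm_smul_inv_norm hv)

theorem nonneg_of_forall_sphere_le (hom : ∀ a : ℝ, 0 ≤ a → ∀ v, F (a • v) = a * F v)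
    (add : ∀ u v, F (u + v) ≤ F u + F v) (hM : ∀ ξ, ‖ξ‖ = 1 → F ξ ≤ M) {ξ : E}
    (hξ : ‖ξ‖ = 1) : 0 ≤ M := by
  have := add ξ (-ξ)
  rw [add_neg_cancel, map_zero_of_posHomogeneous hom] at this
  linarith [hM ξ hξ, hM (-ξ) (by rwa [norm_neg])]

theorem sub_norm_mul_le_map_sub (hom : ∀ a : ℝ, 0 ≤ a → ∀ v, F (a • v) = a * F v)
    (add : ∀ u v, F (u + v) ≤ F u + F v) (hM : ∀ ξ, ‖ξ‖ = 1 → F ξ ≤ M) (x h : E) :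
    F x - ‖h‖ * M ≤ F (x - h) := by
  have := add (x - h) h
  rw [sub_add_cancel] at this
  linarith [le_norm_mul_of_forall_sphere_le hom hM h]

theorem bddBelow_map_sub_closedBall (hom : ∀ a : ℝ, 0 ≤ a → ∀ v, F (a • v) = a * F v)
    (add : ∀ u v, F (u + v) ≤ F u + F v) (hM : ∀ ξ, ‖ξ‖ = 1 → F ξ ≤ M) (hM₀ : 0 ≤ M)
    (x : E) (d : ℝ) : BddBelow {s | ∃ h : E, ‖h‖ ≤ d ∧ s = F (x - h)} := by
  refine ⟨F x - d * M, ?_⟩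
  rintro _ ⟨h, hh, rfl⟩
  have := mul_le_mul_of_nonneg_right hh hM₀
  linarith [sub_norm_mul_le_map_sub hom add hM x h]

theorem sInf_map_sub_closedBall_le (hom : ∀ a : ℝ, 0 ≤ a → ∀ v, F (a • v) = a * F v)
    (add : ∀ u v, F (u + v) ≤ F u + F v) (hM : ∀ ξ, ‖ξ‖ = 1 → F ξ ≤ M) (hM₀ : 0 ≤ M)
    {x : E} {y d : ℝ} (hd : 0 ≤ d) (hyd : d ≤ y) (hx : ‖x‖ = y) :
    sInf {s | ∃ h : E, ‖h‖ ≤ d ∧ s = F (x - h)} ≤ (y - d) * M := by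
  have hbdd := bddBelow_map_sub_closedBall hom add hM hM₀ x d
  rcases (hd.trans hyd).eq_or_lt with rfl | hy
  · obtain rfl : d = 0 := le_antisymm hyd hd
    obtain rfl : x = 0 := norm_eq_zero.mp hx
    refine (csInf_le hbdd ⟨0, by simp, rfl⟩).trans_eq ?_
    simp [map_zero_of_posHomogeneous hom]
  -- the radial point `(d / y) • x` of the ball is the closest one to the origin
  have hk : 0 ≤ (y - d) / y := div_nonneg (by linarith) hy.le
  have hshrink : x - (d / y) • x = ((y - d) / y) • x := by
    rw [sub_div, div_self hy.ne', sub_smul, one_smul]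
  have hmem : ‖(d / y) • x‖ ≤ d := by
    rw [norm_smul, hx, Real.norm_of_nonneg (div_nonneg hd hy.le), div_mul_cancel₀ _ hy.ne']
  calc sInf {s | ∃ h : E, ‖h‖ ≤ d ∧ s = F (x - h)} ≤ F (((y - d) / y) • x) :=
        csInf_le hbdd ⟨_, hmem, by rw [hshrink]⟩
    _ = (y - d) / y * F x := hom _ hk x
    _ ≤ (y - d) / y * (y * M) := by
        gcongr
        simpa [hx] using le_norm_mul_of_forall_sphere_le hom hM x
    _ = (y - d) * M := by field_simp

theorem le_sInf_map_sub_closedBall (hom : ∀ a : ℝ, 0 ≤ a → ∀ v, F (a • v) = a * F v)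
    (add : ∀ u v, F (u + v) ≤ F u + F v) (hM : ∀ ξ, ‖ξ‖ = 1 → F ξ ≤ M) (hM₀ : 0 ≤ M)
    {ξ : E} (hξ : F ξ = M) {y d : ℝ} (hd : 0 ≤ d) (hyd : d ≤ y) :
    (y - d) * M ≤ sInf {s | ∃ h : E, ‖h‖ ≤ d ∧ s = F (y • ξ - h)} := by
  refine le_csInf ⟨_, 0, by simpa using hd, rfl⟩ ?_
  rintro _ ⟨h, hh, rfl⟩
  have := sub_norm_mul_le_map_sub hom add hM (y • ξ) h
  rw [hom y (hd.trans hyd), hξ] at this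
  nlinarith

theorem sSup_sInf_map_sub_eq [ProperSpace E] [Nontrivial E] (hF : Continuous F)
    (hom : ∀ a : ℝ, 0 ≤ a → ∀ v, F (a • v) = a * F v) (add : ∀ u v, F (u + v) ≤ F u + F v)
    {y d : ℝ} (hd : 0 ≤ d) (hyd : d ≤ y) :
    sSup {t | ∃ x : E, ‖x‖ = y ∧ t = sInf {s | ∃ h : E, ‖h‖ ≤ d ∧ s = F (x - h)}} =
      (y - d) * sSup {t | ∃ ξ : E, ‖ξ‖ = 1 ∧ t = F ξ} := by
  obtain ⟨ξ, hξ, hmax⟩ := (isCompact_sphere (0 : E) 1).exists_isMaxOn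
    (NormedSpace.sphere_nonempty.mpr zero_le_one) hF.continuousOn
  rw [mem_sphere_zero_iff_norm] at hξ
  have hM : ∀ η : E, ‖η‖ = 1 → F η ≤ F ξ := fun η hη => hmax (mem_sphere_zero_iff_norm.mpr hη)
  have hM₀ := nonneg_of_forall_sphere_le hom add hM hξ
  have hsphere : sSup {t | ∃ η : E, ‖η‖ = 1 ∧ t = F η} = F ξ :=
    IsGreatest.csSup_eq ⟨⟨ξ, hξ, rfl⟩, by rintro _ ⟨η, hη, rfl⟩; exact hM η hη⟩
  have hyξ : ‖y • ξ‖ = y := by rw [norm_smul, hξ, mul_one, Real.norm_of_nonneg (hd.trans hyd)]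
  rw [hsphere]
  refine IsGreatest.csSup_eq ⟨⟨y • ξ, hyξ, le_antisymm ?_ ?_⟩, ?_⟩
  · exact le_sInf_map_sub_closedBall hom add hM hM₀ rfl hd hyd
  · exact sInf_map_sub_closedBall_le hom add hM hM₀ hd hyd hyξ
  · rintro _ ⟨x, hx, rfl⟩
    exact sInf_map_sub_closedBall_le hom add hM hM₀ hd hyd hx

end Sublinear

section PosPartCost

variable {ι E : Type*} [Fintype ι] [NormedAddCommGroup E] [NormedSpace ℝ E]

noncomputable def posPartCost (c : ι → ℝ) (A : E →ₗ[ℝ] ι → ℝ) (v : E) : ℝ :=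
  ∑ i, c i * max (A v i) 0

theorem posPartCost_smul (c : ι → ℝ) (A : E →ₗ[ℝ] ι → ℝ) {a : ℝ} (ha : 0 ≤ a) (v : E) :
    posPartCost c A (a • v) = a * posPartCost c A v := by
  simp only [posPartCost, Finset.mul_sum, map_smul, Pi.smul_apply, smul_eq_mul]
  refine Finset.sum_congr rfl fun i _ => ?_
  rw [show max (a * A v i) 0 = a * max (A v i) 0 by rw [mul_max_of_nonneg _ _ ha, mul_zero]]
  ring

theorem posPartCost_add_le {c : ι → ℝ} (hc : ∀ i, 0 ≤ c i) (A : E →ₗ[ℝ] ι → ℝ) (u v : E) :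
    posPartCost c A (u + v) ≤ posPartCost c A u + posPartCost c A v := by
  simp only [posPartCost, ← Finset.sum_add_distrib, ← mul_add, map_add, Pi.add_apply]
  gcongr with i
  · exact hc i
  · exact max_le (add_le_add (le_max_left _ _) (le_max_left _ _))
      (add_nonneg (le_max_right _ _) (le_max_right _ _))

theorem continuous_posPartCost [FiniteDimensional ℝ E] (c : ι → ℝ) (A : E →ₗ[ℝ] ι → ℝ) :
    Continuous (posPartCost c A) := by
  unfold posPartCost
  have hA := A.continuous_of_finiteDimensional
  fun_prop

end PosPartCost

/-- the max–min identity
`max_{‖x̃‖ = y} min_{‖x̂‖ ≤ d} c^⊤ (σ(x̃ − x̂))^+ = (y − d) · max_{‖ξ‖ = 1} c^⊤ (σξ)^+`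
for `y ≥ d ≥ 0`. -/
theorem maxMin_pospart_identity {n : ℕ} (hn : 1 ≤ n)
    (c : EuclideanSpace ℝ (Fin n)) (hc : ∀ i, 0 < c i)
    (σ : Matrix (Fin n) (Fin n) ℝ) (y d : ℝ) (hd : 0 ≤ d) (hyd : d ≤ y) :
    sSup {t : ℝ | ∃ xt : EuclideanSpace ℝ (Fin n), ‖xt‖ = y ∧
        t = sInf {s : ℝ | ∃ xh : EuclideanSpace ℝ (Fin n), ‖xh‖ ≤ d ∧
          s = ∑ i, c i * max (σ.mulVec (EuclideanSpace.equiv (Fin n) ℝ (xt - xh)) i) 0}} =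
      (y - d) * sSup {t : ℝ | ∃ ξ : EuclideanSpace ℝ (Fin n), ‖ξ‖ = 1 ∧
        t = ∑ i, c i * max (σ.mulVec (EuclideanSpace.equiv (Fin n) ℝ ξ) i) 0} := by
  have : Nontrivial (EuclideanSpace ℝ (Fin n)) :=
    Module.nontrivial_of_finrank_pos (by rw [finrank_euclideanSpace_fin]; omega)
  let A := σ.mulVecLin ∘ₗ (EuclideanSpace.equiv (Fin n) ℝ).toLinearMap
  exact sSup_sInf_map_sub_eq (continuous_posPartCost _ A) (fun a ha => posPartCost_smul _ A ha)
    (posPartCost_add_le (fun i => (hc i).le) A) hd hyd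
end
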